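/- arXiv:1109.4601 — 10 statements merged into one kernel-verified Lean document; each statement's English description precedes it below -/
import Mathlib

section
/- Let R be a subalgebra of an affine integral domain S over an algebraically closed field k. If there exists a maximal ideal 𝔫 of S with R_{𝔫∩R} = S_𝔫 (as subrings of Frac S), then S ⊆ Frac R; in particular Frac R = Frac S. -/
/-- The localization of a ring `T` at (the complement of) an ideal `M`, realized as a
subset of a ring `K` via a map `f : T →+* K`: the set of `x ∈ K` of the form `f a / f b`
with `b ∉ M`. -/
def locSet {T K : Type*} [CommRing T] [CommRing K] (f : T →+* K) (M : Ideal T) : Set K :=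
  {x | ∃ a b : T, b ∉ M ∧ x * f b = f a}

/-- If `R` is a subalgebra of an affine integral domain `S` over an algebraically closed
field `k` and there is a maximal ideal `𝔫` of `S` with `R_{𝔫 ∩ R} = S_𝔫` inside `Frac S`,
then `S ⊆ Frac R`; in particular every element of `Frac S` is a ratio of elements of `R`,
i.e. `Frac R = Frac S`. -/
theorem stmt_2 {k S : Type*} [Field k] [IsAlgClosed k] [CommRing S] [IsDomain S]
    [Algebra k S] [Algebra.FiniteType k S] (R : Subalgebra k S)
    (h : ∃ n : Ideal S, n.IsMaximal ∧
      locSet ((algebraMap S (FractionRing S)).comp R.toSubring.subtype)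
          (n.comap R.toSubring.subtype)
        = locSet (algebraMap S (FractionRing S)) n) :
    ∀ x : FractionRing S, ∃ a b : R, b ≠ 0 ∧
      x * algebraMap S (FractionRing S) (b : S) = algebraMap S (FractionRing S) (a : S) := by
  obtain ⟨n, hn, heq⟩ := h
  set f := algebraMap S (FractionRing S) with hf
  have hfinj : Function.Injective f := IsFractionRing.injective S (FractionRing S)
  -- every image of an element of S is a ratio of elements of R
  have key : ∀ s : S, ∃ a b : R, (b : S) ∉ n ∧ f s * f (b : S) = f (a : S) := by
    intro s
    have hs : f s ∈ locSet f n := ⟨s, 1, by simpa using hn.ne_top ∘ (Ideal.eq_top_of_isUnit_mem n · isUnit_one), by simp⟩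
    rw [← heq] at hs
    obtain ⟨a, b, hb, hab⟩ := hs
    exact ⟨a, b, hb, hab⟩
  intro x
  obtain ⟨⟨s, t⟩, hx⟩ := IsLocalization.surj (nonZeroDivisors S) x
  obtain ⟨a₁, b₁, hb₁, e₁⟩ := key s
  obtain ⟨a₂, b₂, hb₂, e₂⟩ := key (t : S)
  have ht : (t : S) ≠ 0 := nonZeroDivisors.ne_zero t.2
  have hb₂0 : (b₂ : S) ≠ 0 := fun h0 => hb₂ (h0 ▸ n.zero_mem)
  have hb₁0 : (b₁ : S) ≠ 0 := fun h0 => hb₁ (h0 ▸ n.zero_mem)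
  have ha₂0 : (a₂ : S) ≠ 0 := by
    intro h0
    have : f ((t : S) * (b₂ : S)) = f 0 := by
      rw [map_mul, e₂, h0, map_zero]
    exact mul_ne_zero ht hb₂0 (hfinj this)
  refine ⟨a₁ * b₂, a₂ * b₁, ?_, ?_⟩
  · intro h0
    apply mul_ne_zero ha₂0 hb₁0
    have : ((a₂ * b₁ : R) : S) = ((0 : R) : S) := by rw [h0]
    simpa using this
  · push_cast
    rw [map_mul, map_mul]
    have hx' : x * f (t : S) = f s := hx
    calc x * (f (a₂ : S) * f (b₁ : S))
        = (x * f (t : S)) * f (b₂ : S) * f (b₁ : S) := by rw [← e₂]; ring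
      _ = f s * f (b₁ : S) * f (b₂ : S) := by rw [hx']; ring
      _ = f (a₁ : S) * f (b₂ : S) := by rw [e₁]
end

section
/- Let R be a subalgebra of an affine integral domain S over an algebraically closed field, and suppose the set U = {𝔫 ∈ Max S : R_{𝔫∩R} = S_𝔫} is nonempty. Then U contains a nonempty Zariski-open subset of Max S. -/
section

variable {S K : Type*} [CommRing S] [CommRing K]

theorem locSet_comp_comap_subset {T : Type*} [CommRing T] (f : S →+* K) (φ : T →+* S)
    (M : Ideal S) : locSet (f.comp φ) (M.comap φ) ⊆ locSet f M := by
  rintro x ⟨a, b, hb, hab⟩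
  exact ⟨φ a, φ b, hb, hab⟩

theorem mul_pow_mem_of_le {σ : Type*} [SetLike σ S] [SubmonoidClass σ S] {A : σ} {g s : S}
    {i j : ℕ} (hg : g ∈ A) (h : s * g ^ i ∈ A) (hij : i ≤ j) : s * g ^ j ∈ A := by
  obtain ⟨d, rfl⟩ := Nat.exists_eq_add_of_le hij
  rw [pow_add, ← mul_assoc]
  exact mul_mem h (pow_mem hg d)

theorem exists_mul_pow_mem_of_mem_adjoin {k : Type*} [CommSemiring k] [Algebra k S]
    {R : Subalgebra k S} {t : Set S} {g : S} (hg : g ∈ R) (ht : ∀ x ∈ t, x * g ∈ R) {s : S}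
    (hs : s ∈ Algebra.adjoin k t) : ∃ j : ℕ, s * g ^ j ∈ R := by
  induction hs using Algebra.adjoin_induction with
  | mem x hx => exact ⟨1, by rw [pow_one]; exact ht x hx⟩
  | algebraMap c => exact ⟨0, by rw [pow_zero, mul_one]; exact R.algebraMap_mem c⟩
  | add x y _ _ hx hy =>
    obtain ⟨i, hxi⟩ := hx
    obtain ⟨j, hyj⟩ := hy
    refine ⟨i + j, ?_⟩
    rw [add_mul]
    exact R.add_mem (mul_pow_mem_of_le hg hxi (Nat.le_add_right i j))
      (mul_pow_mem_of_le hg hyj (Nat.le_add_left j i))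
  | mul x y _ _ hx hy =>
    obtain ⟨i, hxi⟩ := hx
    obtain ⟨j, hyj⟩ := hy
    refine ⟨i + j, ?_⟩
    rw [pow_add, mul_mul_mul_comm]
    exact R.mul_mem hxi hyj

variable {f : S →+* K} {A : Subring S} {M : Ideal S}

theorem exists_mul_mem_of_locSet_subset (hf : Function.Injective f) (hM : M ≠ ⊤)
    (h : locSet f M ⊆ locSet (f.comp A.subtype) (M.comap A.subtype)) (s : S) :
    ∃ b ∈ A, b ∉ M ∧ s * b ∈ A := by
  obtain ⟨a, b, hb, hab⟩ := h ⟨s, 1, (Ideal.ne_top_iff_one M).1 hM, by rw [map_one, mul_one]⟩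
  refine ⟨b, b.2, hb, ?_⟩
  rw [hf ((map_mul f s b).trans hab)]
  exact a.2

theorem exists_mem_notMem_forall_mul_mem [M.IsPrime] (t : Finset S)
    (h : ∀ s : S, ∃ b ∈ A, b ∉ M ∧ s * b ∈ A) : ∃ g ∈ A, g ∉ M ∧ ∀ x ∈ t, x * g ∈ A := by
  choose b hbA hbM hsb using h
  refine ⟨∏ x ∈ t, b x, prod_mem fun x _ => hbA x, by simp [Ideal.IsPrime.prod_mem_iff, hbM],
    fun x hx => ?_⟩
  classical
  rw [← Finset.mul_prod_erase t b hx, ← mul_assoc]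
  exact mul_mem (hsb x) (prod_mem fun y _ => hbA y)

theorem locSet_subset_of_mul_pow_mem {g : S} (hgA : g ∈ A) (hS : ∀ s : S, ∃ j : ℕ, s * g ^ j ∈ A)
    (hM : M.IsPrime) (hgM : g ∉ M) :
    locSet f M ⊆ locSet (f.comp A.subtype) (M.comap A.subtype) := by
  rintro x ⟨a, c, hc, hac⟩
  obtain ⟨i, hai⟩ := hS a
  obtain ⟨j, hcj⟩ := hS c
  have ha := mul_pow_mem_of_le hgA hai (Nat.le_add_right i j)
  have hc' := mul_pow_mem_of_le hgA hcj (Nat.le_add_left j i)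
  refine ⟨⟨a * g ^ (i + j), ha⟩, ⟨c * g ^ (i + j), hc'⟩,
    hM.mul_notMem hc fun h => hgM (hM.mem_of_pow_mem _ h), ?_⟩
  change x * f (c * g ^ (i + j)) = f (a * g ^ (i + j))
  rw [map_mul, map_mul, ← mul_assoc, hac]

end

theorem stmt_3_general {k S : Type*} [Field k] [CommRing S] [IsDomain S]
    [Algebra k S] [Algebra.FiniteType k S] (R : Subalgebra k S)
    (U : Set (Ideal S))
    (hU : U = {n | n.IsMaximal ∧
      locSet ((algebraMap S (FractionRing S)).comp R.toSubring.subtype)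
          (n.comap R.toSubring.subtype)
        = locSet (algebraMap S (FractionRing S)) n})
    (hne : U.Nonempty) :
    ∃ g : S, g ≠ 0 ∧ (∃ n : Ideal S, n.IsMaximal ∧ g ∉ n) ∧
      ∀ n : Ideal S, n.IsMaximal → g ∉ n → n ∈ U := by
  subst hU
  obtain ⟨n₀, hn₀, hloc⟩ := hne
  have hden := exists_mul_mem_of_locSet_subset (IsFractionRing.injective S (FractionRing S))
    hn₀.ne_top hloc.ge
  obtain ⟨t, ht⟩ := Algebra.FiniteType.out (R := k) (A := S)
  obtain ⟨g, hgR, hgn₀, htg⟩ := exists_mem_notMem_forall_mul_mem t hden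
  have hS (s : S) : ∃ j : ℕ, s * g ^ j ∈ R :=
    exists_mul_pow_mem_of_mem_adjoin hgR htg (ht ▸ Algebra.mem_top)
  refine ⟨g, fun h => hgn₀ (h ▸ n₀.zero_mem), ⟨n₀, hn₀, hgn₀⟩, fun n hn hgn => ⟨hn, ?_⟩⟩
  exact (locSet_comp_comap_subset _ _ _).antisymm
    (locSet_subset_of_mul_pow_mem hgR hS hn.isPrime hgn)

/-- If `U = {𝔫 ∈ Max S | R_{𝔫 ∩ R} = S_𝔫}` is nonempty, then `U` contains a nonempty
Zariski-open subset of `Max S` (a nonempty basic open set `D(g)` with `g ≠ 0`). -/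
theorem stmt_3 {k S : Type*} [Field k] [IsAlgClosed k] [CommRing S] [IsDomain S]
    [Algebra k S] [Algebra.FiniteType k S] (R : Subalgebra k S)
    (U : Set (Ideal S))
    (hU : U = {n | n.IsMaximal ∧
      locSet ((algebraMap S (FractionRing S)).comp R.toSubring.subtype)
          (n.comap R.toSubring.subtype)
        = locSet (algebraMap S (FractionRing S)) n})
    (hne : U.Nonempty) :
    ∃ g : S, g ≠ 0 ∧ (∃ n : Ideal S, n.IsMaximal ∧ g ∉ n) ∧
      ∀ n : Ideal S, n.IsMaximal → g ∉ n → n ∈ U :=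
  stmt_3_general R U hU hne
end

section
/- Let R be a subalgebra of an affine integral domain S and let φ: Max S → Max R be given by 𝔮 ↦ 𝔮 ∩ R. Then φ is injective on the set U = {𝔫 ∈ Max S : R_{𝔫∩R} = S_𝔫}. -/
/-- The contraction map `φ : Max S → Max R`, `𝔮 ↦ 𝔮 ∩ R`, is injective on
`U = {𝔫 ∈ Max S | R_{𝔫 ∩ R} = S_𝔫}`. -/
theorem stmt_4 {k S : Type*} [Field k] [IsAlgClosed k] [CommRing S] [IsDomain S]
    [Algebra k S] [Algebra.FiniteType k S] (R : Subalgebra k S)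
    (n n' : Ideal S) (hn : n.IsMaximal) (hn' : n'.IsMaximal)
    (hU : locSet ((algebraMap S (FractionRing S)).comp R.toSubring.subtype)
            (n.comap R.toSubring.subtype)
          = locSet (algebraMap S (FractionRing S)) n)
    (hU' : locSet ((algebraMap S (FractionRing S)).comp R.toSubring.subtype)
            (n'.comap R.toSubring.subtype)
          = locSet (algebraMap S (FractionRing S)) n')
    (heq : n.comap R.toSubring.subtype = n'.comap R.toSubring.subtype) :
    n = n' := by
  classical
  set f := algebraMap S (FractionRing S) with hf
  have hloc : locSet f n = locSet f n' := by
    rw [← hU, ← hU', heq]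
  have hinj : Function.Injective f := IsFractionRing.injective S (FractionRing S)
  have key : ∀ (m : Ideal S) (s : S), s ≠ 0 → (s ∉ m ↔ (f s)⁻¹ ∈ locSet f m) := by
    intro m s hs
    have hfs : f s ≠ 0 := fun h0 => hs (hinj (by simpa using h0))
    constructor
    · intro h
      exact ⟨1, s, h, by rw [inv_mul_cancel₀ hfs, map_one]⟩
    · rintro ⟨a, b, hb, hx⟩ hsm
      apply hb
      have hba : f b = f (a * s) := by
        rw [map_mul, ← hx]
        field_simp
      rw [hinj hba]
      exact m.mul_mem_left a hsm
  ext s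
  by_cases hs : s = 0
  · simp [hs]
  · have h1 := key n s hs
    have h2 := key n' s hs
    rw [hloc] at h1
    tauto
end

section
/- With R a subalgebra of an affine integral domain S, U = {𝔫 ∈ Max S : R_{𝔫∩R} = S_𝔫} is contained in W = {𝔫 ∈ Max S : √((𝔫∩R)S) = 𝔫}. -/
/-!
Let `𝔭 = 𝔫 ∩ R`. It is maximal, since `R/𝔭` embeds in the residue field `S/𝔫`, which is finite
over `k` (Zariski's lemma). As `S` is a Jacobson ring, `√(𝔭S)` is the intersection of the maximal
ideals `𝔪 ⊇ 𝔭S`, and each of them contracts to `𝔭`. If `R_𝔭 = S_𝔫`, then `1/y ∈ R_𝔭` for `y ∉ 𝔫`,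
so `y` divides in `S` some `d ∈ R \ 𝔭`; an element `y ∈ 𝔪 \ 𝔫` would thus put `d` in `𝔪 ∩ R = 𝔭`.
Hence every such `𝔪` is `𝔫`.
-/

theorem Ideal.isMaximal_comap_of_finiteType {k A S : Type*} [Field k] [CommRing A] [CommRing S]
    [Algebra k A] [Algebra k S] [Algebra.FiniteType k S] (φ : A →ₐ[k] S) (n : Ideal S)
    [n.IsMaximal] : (n.comap φ).IsMaximal := by
  let := Ideal.Quotient.field n
  have : Algebra.FiniteType k (S ⧸ n) :=
    .of_surjective (Ideal.Quotient.mkₐ k n) Ideal.Quotient.mk_surjective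
  have : Module.Finite k (S ⧸ n) := finite_of_finite_type_of_isJacobsonRing k _
  have : Algebra.IsIntegral k (A ⧸ n.comap φ) :=
    .of_injective (Ideal.quotientMapₐ n φ le_rfl) Ideal.quotientMap_injective
  exact Ideal.Quotient.maximal_of_isField _ (isField_of_isIntegral_of_isField' (Field.toIsField k))

theorem exists_dvd_of_locSet_subset {R S K : Type*} [CommRing R] [CommRing S] [Field K]
    {f : S →+* K} (hf : Function.Injective f) (ι : R →+* S) {n : Ideal S}
    (h : locSet f n ⊆ locSet (f.comp ι) (n.comap ι)) {y : S} (hy : y ∉ n) :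
    ∃ d ∉ n.comap ι, y ∣ ι d := by
  have hfy : f y ≠ 0 := (map_ne_zero_iff f hf).mpr (ne_of_mem_of_not_mem n.zero_mem hy).symm
  obtain ⟨c, d, hd, hcd⟩ := h ⟨1, y, hy, by rw [inv_mul_cancel₀ hfy, map_one]⟩
  refine ⟨d, hd, ι c, hf ?_⟩
  rw [RingHom.comp_apply, RingHom.comp_apply, inv_mul_eq_iff_eq_mul₀ hfy] at hcd
  rw [map_mul, hcd]

theorem Ideal.radical_map_comap_eq_of_forall_exists_dvd {R S : Type*} [CommRing R] [CommRing S]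
    [IsJacobsonRing S] (ι : R →+* S) {n : Ideal S} (hn : n.IsMaximal)
    (hp : (n.comap ι).IsMaximal) (hdvd : ∀ y ∉ n, ∃ d ∉ n.comap ι, y ∣ ι d) :
    (Ideal.map ι (n.comap ι)).radical = n := by
  refine le_antisymm ((Ideal.radical_mono Ideal.map_comap_le).trans hn.isPrime.radical.le) ?_
  rw [Ideal.radical_eq_jacobson]
  refine le_sInf ?_
  rintro m ⟨hpm, hm⟩
  have hcomap : m.comap ι = n.comap ι :=
    (hp.eq_of_le (Ideal.comap_ne_top ι hm.ne_top) (Ideal.map_le_iff_le_comap.mp hpm)).symm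
  by_contra hnm
  obtain ⟨y, hym, hyn⟩ := Set.not_subset.mp fun hmn => hnm (hm.eq_of_le hn.ne_top hmn).ge
  obtain ⟨d, hd, c, hdc⟩ := hdvd y hyn
  exact hd (hcomap ▸ show ι d ∈ m from hdc ▸ m.mul_mem_right c hym)

theorem stmt_7_general {k S : Type*} [Field k] [CommRing S] [IsDomain S]
    [Algebra k S] [Algebra.FiniteType k S] (R : Subalgebra k S)
    (U W : Set (Ideal S))
    (hU : U = {n | n.IsMaximal ∧
      locSet ((algebraMap S (FractionRing S)).comp R.toSubring.subtype)
          (n.comap R.toSubring.subtype)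
        = locSet (algebraMap S (FractionRing S)) n})
    (hW : W = {n | n.IsMaximal ∧
      (Ideal.map R.toSubring.subtype (n.comap R.toSubring.subtype)).radical = n}) :
    U ⊆ W := by
  subst hU hW
  rintro n ⟨hn, hloc⟩
  have : IsJacobsonRing S := isJacobsonRing_of_finiteType (A := k)
  exact ⟨hn, Ideal.radical_map_comap_eq_of_forall_exists_dvd _ hn
    (Ideal.isMaximal_comap_of_finiteType R.val n)
    fun _ hy => exists_dvd_of_locSet_subset (IsFractionRing.injective S (FractionRing S)) _
      hloc.ge hy⟩

/-- For `R` a subalgebra of an affine integral domain `S`,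
`U = {𝔫 ∈ Max S | R_{𝔫 ∩ R} = S_𝔫}` is contained in
`W = {𝔫 ∈ Max S | √((𝔫 ∩ R)S) = 𝔫}`. -/
theorem stmt_7 {k S : Type*} [Field k] [IsAlgClosed k] [CommRing S] [IsDomain S]
    [Algebra k S] [Algebra.FiniteType k S] (R : Subalgebra k S)
    (U W : Set (Ideal S))
    (hU : U = {n | n.IsMaximal ∧
      locSet ((algebraMap S (FractionRing S)).comp R.toSubring.subtype)
          (n.comap R.toSubring.subtype)
        = locSet (algebraMap S (FractionRing S)) n})
    (hW : W = {n | n.IsMaximal ∧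
      (Ideal.map R.toSubring.subtype (n.comap R.toSubring.subtype)).radical = n}) :
    U ⊆ W :=
  stmt_7_general R U W hU hW
end

section
/- Let R' be a subalgebra of a commutative ring S, I an ideal of S, and R = k[R', I] the subalgebra generated by R' and I. If 𝔮 is a prime ideal of S not containing I, then R_{𝔮∩R} = S_𝔮 (as subrings of the fraction field). -/
/-- Let `R'` be a subalgebra of an integral domain `S` over `k`, `I` an ideal of `S`,
and `R = k[R', I]` the subalgebra generated by `R'` and `I`.  If `𝔮` is a prime ideal of
`S` not containing `I`, then `R_{𝔮 ∩ R} = S_𝔮` inside `Frac S`. -/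
theorem stmt_8 {k S : Type*} [Field k] [CommRing S] [IsDomain S] [Algebra k S]
    (R' : Subalgebra k S) (I : Ideal S) (q : Ideal S) (hq : q.IsPrime) (hIq : ¬ I ≤ q)
    (R : Subalgebra k S) (hR : R = Algebra.adjoin k ((R' : Set S) ∪ (I : Set S))) :
    locSet ((algebraMap S (FractionRing S)).comp R.toSubring.subtype)
        (q.comap R.toSubring.subtype)
      = locSet (algebraMap S (FractionRing S)) q := by
  ext x
  simp only [locSet, Set.mem_setOf_eq]
  constructor
  · rintro ⟨a, b, hb, hx⟩
    exact ⟨a.1, b.1, hb, hx⟩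
  · rintro ⟨a, b, hb, hx⟩
    obtain ⟨t, htI, htq⟩ := SetLike.not_le_iff_exists.mp hIq
    have hIR : (I : Set S) ⊆ R := by
      rw [hR]; exact fun y hy => Algebra.subset_adjoin (Set.mem_union_right _ hy)
    refine ⟨⟨a * t, hIR (I.mul_mem_left a htI)⟩, ⟨b * t, hIR (I.mul_mem_left b htI)⟩, ?_, ?_⟩
    · intro h
      have h' : b * t ∈ q := h
      rcases hq.mem_or_mem h' with h1 | h1
      exacts [hb h1, htq h1]
    · show x * algebraMap S (FractionRing S) (b * t) = algebraMap S (FractionRing S) (a * t)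
      rw [map_mul, map_mul, ← mul_assoc, hx]
end

section
/- Let S be an affine algebra over an algebraically closed field, I a non-maximal proper ideal of S, and R = k + I. Then: (a) I is a maximal ideal of R; (b) for every maximal ideal 𝔫 of S containing I, one has 𝔫 ∩ R = I and √(I·S) = I ⊊ 𝔫; hence the set W = {𝔫 ∈ Max S : √((𝔫∩R)S) = 𝔫} equals the complement of Z(I) = {𝔫 ∈ Max S : 𝔫 ⊇ I}. -/
/-! Every element of `R = k + I` is a scalar modulo `I`. A nonzero scalar is a unit, so any ideal
of `R` strictly containing `I ∩ R` is everything, and any proper ideal `𝔫 ⊇ I` of `S` meets `R` in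
exactly `I ∩ R`; as `I ⊆ R`, extending `I ∩ R` back to `S` returns `I`. If instead `𝔫 ⊉ I`, then
`1 = i + m` with `i ∈ I`, `m ∈ 𝔫`, and `m = 1 - i ∈ R`, so `𝔫 = 𝔫·m + 𝔫·i` is generated by
`𝔫 ∩ R`. -/

theorem Algebra.exists_sub_algebraMap_mem_of_mem_adjoin {k S : Type*} [CommRing k] [CommRing S]
    [Algebra k S] (I : Ideal S) {x : S} (hx : x ∈ Algebra.adjoin k (I : Set S)) :
    ∃ c : k, x - algebraMap k S c ∈ I := by
  have hle : Algebra.adjoin k (I : Set S) ≤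
      (⊥ : Subalgebra k (S ⧸ I)).comap (Ideal.Quotient.mkₐ k I) :=
    Algebra.adjoin_le fun y hy => ⟨0, by simp [Ideal.Quotient.eq_zero_iff_mem.mpr hy]⟩
  obtain ⟨c, hc⟩ := Algebra.mem_bot.mp (hle hx)
  exact ⟨c, Ideal.Quotient.eq.mp (by simpa [Ideal.Quotient.mk_algebraMap] using hc.symm)⟩

namespace Ideal

variable {A S : Type*} [CommRing A] [CommRing S] {f : A →+* S} {I : Ideal S}

theorem map_comap_eq_self_of_subset_range (hI : (I : Set S) ⊆ f.range) :
    (I.comap f).map f = I := by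
  refine le_antisymm map_comap_le fun y hy => ?_
  obtain ⟨a, rfl⟩ := hI hy
  exact mem_map_of_mem f hy

theorem map_comap_eq_self_of_sup_eq_top (hI : (I : Set S) ⊆ f.range) {n : Ideal S}
    (hIn : I ⊔ n = ⊤) : (n.comap f).map f = n := by
  have mem_map : ∀ y ∈ f.range, y ∈ n → y ∈ (n.comap f).map f := by
    rintro _ ⟨a, rfl⟩ hy
    exact mem_map_of_mem f hy
  obtain ⟨i, hi, m, hm, him⟩ := Submodule.mem_sup.mp (hIn ▸ Submodule.mem_top : (1 : S) ∈ I ⊔ n)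
  have hm_range : m ∈ f.range := by
    rw [eq_sub_of_add_eq' him]
    exact f.range.sub_mem f.range.one_mem (hI hi)
  refine le_antisymm map_comap_le fun x hx => ?_
  rw [← mul_one x, ← him, mul_add]
  exact add_mem (mem_map _ (hI (I.mul_mem_left x hi)) (n.mul_mem_right i hx))
    (mul_mem_left _ x (mem_map m hm_range hm))

end Ideal

section

variable {k S : Type*} [Field k] [CommRing S] [Algebra k S] {I : Ideal S} {R : Subalgebra k S}

theorem Ideal.eq_zero_of_algebraMap_mem {n : Ideal S} (hn : n ≠ ⊤) {c : k}
    (hc : algebraMap k S c ∈ n) : c = 0 := by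
  by_contra h
  exact hn (n.eq_top_of_isUnit_mem hc ((Ne.isUnit h).map _))

theorem Subalgebra.comap_subtype_eq_of_le (hR : ∀ x ∈ R, ∃ c : k, x - algebraMap k S c ∈ I)
    {n : Ideal S} (hn : n ≠ ⊤) (hIn : I ≤ n) :
    n.comap R.toSubring.subtype = I.comap R.toSubring.subtype := by
  refine le_antisymm (fun x hx => ?_) (Ideal.comap_mono hIn)
  obtain ⟨c, hc⟩ := hR x x.2
  have hc0 : c = 0 := Ideal.eq_zero_of_algebraMap_mem hn <| by
    simpa using n.sub_mem (show (x : S) ∈ n from hx) (hIn hc)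
  show (x : S) ∈ I
  simpa [hc0] using hc

theorem Subalgebra.isMaximal_comap_subtype
    (hR : ∀ x ∈ R, ∃ c : k, x - algebraMap k S c ∈ I) (hI : I ≠ ⊤) :
    (I.comap R.toSubring.subtype).IsMaximal := by
  refine Ideal.isMaximal_iff.mpr ⟨fun h => hI (I.eq_top_iff_one.mpr h), fun J x hIJ hxI hxJ => ?_⟩
  obtain ⟨c, hc⟩ := hR x x.2
  have hc0 : c ≠ 0 := by
    rintro rfl
    exact hxI (show (x : S) ∈ I by simpa using hc)
  let c' : R.toSubring := ⟨algebraMap k S c, R.algebraMap_mem c⟩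
  have hc'J : c' ∈ J := by simpa using J.sub_mem hxJ (hIJ hc : x - c' ∈ J)
  exact J.eq_top_iff_one.mp (J.eq_top_of_isUnit_mem hc'J ((Ne.isUnit hc0).map (algebraMap k R)))

end

theorem stmt_9_general {k S : Type*} [Field k] [CommRing S] [Algebra k S]
    (I : Ideal S) (hproper : I ≠ ⊤) (hnotmax : ¬ I.IsMaximal) (hrad : I.IsRadical)
    (R : Subalgebra k S) (hR : R = Algebra.adjoin k (I : Set S)) :
    (Ideal.comap R.toSubring.subtype I).IsMaximal ∧
    (∀ n : Ideal S, n.IsMaximal → I ≤ n →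
      n.comap R.toSubring.subtype = I.comap R.toSubring.subtype ∧
      (Ideal.map R.toSubring.subtype (I.comap R.toSubring.subtype)).radical = I ∧
      I < n) ∧
    (∀ n : Ideal S, n.IsMaximal →
      ((Ideal.map R.toSubring.subtype (n.comap R.toSubring.subtype)).radical = n
        ↔ ¬ I ≤ n)) := by
  have hIR : (I : Set S) ⊆ R.toSubring.subtype.range := by
    rw [Subring.range_subtype]
    exact hR ▸ Algebra.subset_adjoin
  have hRI : ∀ x ∈ R, ∃ c : k, x - algebraMap k S c ∈ I := fun x hx =>
    Algebra.exists_sub_algebraMap_mem_of_mem_adjoin I (hR ▸ hx)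
  have hcomap : ∀ n : Ideal S, n.IsMaximal → I ≤ n →
      n.comap R.toSubring.subtype = I.comap R.toSubring.subtype := fun n hn =>
    Subalgebra.comap_subtype_eq_of_le hRI hn.ne_top
  have hradical : (Ideal.map R.toSubring.subtype (I.comap R.toSubring.subtype)).radical = I := by
    rw [Ideal.map_comap_eq_self_of_subset_range hIR, hrad.radical]
  refine ⟨Subalgebra.isMaximal_comap_subtype hRI hproper,
    fun n hn hIn => ⟨hcomap n hn hIn, hradical, hIn.lt_of_ne ?_⟩,
    fun n hn => ⟨fun h hIn => ?_, fun hIn => ?_⟩⟩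
  · rintro rfl
    exact hnotmax hn
  · rw [hcomap n hn hIn, hradical] at h
    exact hnotmax (h ▸ hn)
  · have hsup : I ⊔ n = ⊤ := sup_comm n I ▸ hn.1.2 _ (left_lt_sup.mpr hIn)
    rw [Ideal.map_comap_eq_self_of_sup_eq_top hIR hsup, hn.isPrime.radical]

/-- Let `S` be an affine integral domain over an algebraically closed field `k`, `I` a
proper, non-maximal, radical ideal of `S`, and `R = k + I` (the subalgebra generated by
`I`).  Then (a) `I` is a maximal ideal of `R`; (b) every maximal ideal `𝔫 ⊇ I` of `S`
satisfies `𝔫 ∩ R = I ∩ R` and `√(I·S) = I ⊊ 𝔫`; and (c) the locus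
`W = {𝔫 ∈ Max S | √((𝔫 ∩ R)S) = 𝔫}` is exactly the complement of
`Z(I) = {𝔫 ∈ Max S | 𝔫 ⊇ I}`. -/
theorem stmt_9 {k S : Type*} [Field k] [IsAlgClosed k] [CommRing S] [IsDomain S]
    [Algebra k S] [Algebra.FiniteType k S]
    (I : Ideal S) (hproper : I ≠ ⊤) (hnotmax : ¬ I.IsMaximal) (hrad : I.IsRadical)
    (R : Subalgebra k S) (hR : R = Algebra.adjoin k (I : Set S)) :
    (Ideal.comap R.toSubring.subtype I).IsMaximal ∧
    (∀ n : Ideal S, n.IsMaximal → I ≤ n →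
      n.comap R.toSubring.subtype = I.comap R.toSubring.subtype ∧
      (Ideal.map R.toSubring.subtype (I.comap R.toSubring.subtype)).radical = I ∧
      I < n) ∧
    (∀ n : Ideal S, n.IsMaximal →
      ((Ideal.map R.toSubring.subtype (n.comap R.toSubring.subtype)).radical = n
        ↔ ¬ I ≤ n)) :=
  stmt_9_general I hproper hnotmax hrad R hR
end

section
/- Let S = k[x,y] be a polynomial ring over a field k and R = k + (x)S = k[x, xy, xy², …]. Then for every b ∈ k, the maximal ideals (x, y−b) of S all contract to the same maximal ideal (x)S ∩ R = (x, xy, xy², …) of R. -/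
open MvPolynomial

private lemma decomp {k : Type*} [Field k]
    {p : MvPolynomial (Fin 2) k}
    (hp : p ∈ Algebra.adjoin k
      {p : MvPolynomial (Fin 2) k | ∃ n : ℕ, p = X 0 * X 1 ^ n}) :
    ∃ (c : k) (s : MvPolynomial (Fin 2) k), p = C c + X 0 * s := by
  induction hp using Algebra.adjoin_induction with
  | mem p hp => obtain ⟨n, rfl⟩ := hp; exact ⟨0, X 1 ^ n, by simp⟩
  | algebraMap c => exact ⟨c, 0, by simp [algebraMap_eq]⟩
  | add p q _ _ hp hq =>
      obtain ⟨c, s, rfl⟩ := hp; obtain ⟨d, t, rfl⟩ := hq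
      exact ⟨c + d, s + t, by rw [map_add]; ring⟩
  | mul p q _ _ hp hq =>
      obtain ⟨c, s, rfl⟩ := hp; obtain ⟨d, t, rfl⟩ := hq
      exact ⟨c * d, s * C d + C c * t + X 0 * s * t, by rw [map_mul]; ring⟩

/-- Let `S = k[x,y]` and `R = k + (x)S = k[x, xy, xy², …]`.  For every `b ∈ k`, the
maximal ideal `(x, y - b)` of `S` contracts to the same maximal ideal `(x)S ∩ R` of `R`,
and that contraction is maximal. -/
theorem stmt_10 {k : Type*} [Field k]
    (R : Subalgebra k (MvPolynomial (Fin 2) k))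
    (hR : R = Algebra.adjoin k
      {p : MvPolynomial (Fin 2) k | ∃ n : ℕ, p = X 0 * X 1 ^ n}) :
    ∀ b : k,
      (Ideal.span {(X 0 : MvPolynomial (Fin 2) k), X 1 - C b}).comap R.toSubring.subtype
        = (Ideal.span {(X 0 : MvPolynomial (Fin 2) k)}).comap R.toSubring.subtype ∧
      ((Ideal.span {(X 0 : MvPolynomial (Fin 2) k)}).comap R.toSubring.subtype).IsMaximal := by
  subst hR
  set A := Algebra.adjoin k
      {p : MvPolynomial (Fin 2) k | ∃ n : ℕ, p = X 0 * X 1 ^ n} with hA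
  intro b
  have hdec : ∀ r : A.toSubring, ∃ (c : k) (s : MvPolynomial (Fin 2) k),
      A.toSubring.subtype r = C c + X 0 * s := fun r =>
    decomp (Subalgebra.mem_toSubring.mp r.2)
  have hzero : ∀ (v : Fin 2 → k) (p : MvPolynomial (Fin 2) k), v 0 = 0 →
      p ∈ Ideal.span {(X 0 : MvPolynomial (Fin 2) k)} → aeval v p = 0 := by
    intro v p hv hp
    obtain ⟨s, rfl⟩ := Ideal.mem_span_singleton.mp hp
    simp [hv]
  have hbigzero : ∀ p ∈ Ideal.span {(X 0 : MvPolynomial (Fin 2) k), X 1 - C b},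
      aeval (![0, b] : Fin 2 → k) p = 0 := by
    intro p hp
    have hle : Ideal.span {(X 0 : MvPolynomial (Fin 2) k), X 1 - C b} ≤
        RingHom.ker ((aeval (![0, b] : Fin 2 → k)).toRingHom) := by
      rw [Ideal.span_le]
      rintro q hq
      simp only [Set.mem_insert_iff, Set.mem_singleton_iff] at hq
      rcases hq with rfl | rfl <;> simp [RingHom.mem_ker]
    exact hle hp
  constructor
  · ext r
    obtain ⟨c, s, heq⟩ := hdec r
    simp only [Ideal.mem_comap, heq]
    constructor
    · intro h
      have h0 := hbigzero _ h
      simp at h0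
      rw [h0, map_zero, zero_add]
      exact Ideal.mem_span_singleton.mpr ⟨s, rfl⟩
    · intro h
      exact Ideal.span_mono (Set.singleton_subset_iff.mpr (Set.mem_insert _ _)) h
  · have hker : (Ideal.span {(X 0 : MvPolynomial (Fin 2) k)}).comap A.toSubring.subtype
        = RingHom.ker ((aeval (0 : Fin 2 → k)).toRingHom.comp A.toSubring.subtype) := by
      ext r
      obtain ⟨c, s, heq⟩ := hdec r
      simp only [Ideal.mem_comap, RingHom.mem_ker, RingHom.comp_apply, heq]
      constructor
      · intro h
        exact hzero _ _ rfl h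
      · intro h
        simp at h
        rw [h, map_zero, zero_add]
        exact Ideal.mem_span_singleton.mpr ⟨s, rfl⟩
    rw [hker]
    apply RingHom.ker_isMaximal_of_surjective
    intro c
    have hC : (C c : MvPolynomial (Fin 2) k) ∈ A := by
      rw [hA, ← algebraMap_eq]
      exact Subalgebra.algebraMap_mem _ c
    refine ⟨⟨C c, Subalgebra.mem_toSubring.mpr hC⟩, ?_⟩
    show (aeval (0 : Fin 2 → k)) (C c) = c
    simp
end

section
/- Let R ⊆ S be integral domains, 𝔪 ∈ Max R, 𝔫 ∈ Max S with 𝔫 ∩ R = 𝔪 and R_𝔪 = S_𝔫 (inside Frac S). Then for every prime 𝔭 of R contained in 𝔪, the extension 𝔭S_𝔫 is a prime ideal of S_𝔫 and 𝔭S_𝔫 ∩ R = 𝔭. -/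
theorem exists_mul_eq_mul_of_locSet_eq {R S K : Type*} [CommRing R] [CommRing S] [Field K]
    [Algebra R S] [Algebra S K] (hinj : Function.Injective (algebraMap S K))
    {m : Ideal R} {n : Ideal S}
    (hloc : locSet ((algebraMap S K).comp (algebraMap R S)) m = locSet (algebraMap S K) n)
    (s : S) {t : S} (ht : t ∉ n) :
    ∃ a, ∃ b ∉ m, s * algebraMap R S b = algebraMap R S a * t := by
  have ht0 : algebraMap S K t ≠ 0 :=
    (map_ne_zero_iff _ hinj).mpr fun h ↦ ht (h ▸ n.zero_mem)
  have hmem : algebraMap S K s / algebraMap S K t ∈ locSet (algebraMap S K) n :=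
    ⟨s, t, ht, div_mul_cancel₀ _ ht0⟩
  obtain ⟨a, b, hb, hab⟩ := hloc ▸ hmem
  refine ⟨a, b, hb, hinj ?_⟩
  simp only [RingHom.comp_apply] at hab
  rw [map_mul, map_mul, ← hab]
  field_simp

theorem IsLocalization.of_exists_mul_eq_mul {R S T : Type*} [CommRing R] [CommRing S]
    [CommRing T] [Algebra R S] [Algebra S T] [Algebra R T] [IsScalarTower R S T]
    {M : Submonoid R} {N : Submonoid S} [IsLocalization N T]
    (hMN : M ≤ N.comap (algebraMap R S)) (hinj : Function.Injective (algebraMap R T))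
    (h : ∀ s, ∀ t ∈ N, ∃ a, ∃ b ∈ M, s * algebraMap R S b = algebraMap R S a * t) :
    IsLocalization M T where
  map_units b := by
    rw [IsScalarTower.algebraMap_apply R S T]
    exact IsLocalization.map_units T (⟨_, hMN b.2⟩ : N)
  surj z := by
    obtain ⟨⟨s, t⟩, hz⟩ := IsLocalization.surj N z
    obtain ⟨a, b, hb, hab⟩ := h s t t.2
    refine ⟨(a, ⟨b, hb⟩), (IsLocalization.map_units T t).mul_right_cancel ?_⟩
    simp only [IsScalarTower.algebraMap_apply R S T]
    rw [mul_right_comm, hz, ← map_mul, hab, map_mul]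
  exists_of_eq hab := ⟨1, by rw [hinj hab]⟩

theorem stmt_14_general {S : Type*} [CommRing S] [IsDomain S] (R : Subring S)
    (m : Ideal R) (hm : m.IsMaximal)
    (n : Ideal S) [hnp : n.IsPrime]
    (hcon : n.comap R.subtype = m)
    (hloc : locSet ((algebraMap S (FractionRing S)).comp R.subtype) m
      = locSet (algebraMap S (FractionRing S)) n) :
    ∀ p : Ideal R, p.IsPrime → p ≤ m →
      (Ideal.map ((algebraMap S (Localization.AtPrime n)).comp R.subtype) p).IsPrime ∧
      Ideal.comap ((algebraMap S (Localization.AtPrime n)).comp R.subtype)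
          (Ideal.map ((algebraMap S (Localization.AtPrime n)).comp R.subtype) p)
        = p := by
  intro p hp hpm
  have hinj : Function.Injective (algebraMap R (Localization.AtPrime n)) :=
    (IsLocalization.injective _ n.primeCompl_le_nonZeroDivisors).comp Subtype.val_injective
  have : IsLocalization m.primeCompl (Localization.AtPrime n) :=
    .of_exists_mul_eq_mul (N := n.primeCompl) (fun b hb hbn ↦ hb (hcon ▸ hbn)) hinj
      fun s t ht ↦ exists_mul_eq_mul_of_locSet_eq (IsFractionRing.injective S _) hloc s ht
  have hdisj : Disjoint (m.primeCompl : Set R) p := Set.disjoint_compl_left_iff_subset.mpr hpm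
  exact ⟨IsLocalization.isPrime_of_isPrime_disjoint _ _ p hp hdisj,
    IsLocalization.under_map_of_isPrime_disjoint _ _ hp hdisj⟩

/-- Let `R ⊆ S` be integral domains, `𝔪 ∈ Max R`, `𝔫 ∈ Max S` with `𝔫 ∩ R = 𝔪` and
`R_𝔪 = S_𝔫` inside `Frac S`.  Then for every prime `𝔭 ⊆ 𝔪` of `R`, the extension
`𝔭S_𝔫` is a prime ideal of `S_𝔫` and `𝔭S_𝔫 ∩ R = 𝔭`. -/
theorem stmt_14 {S : Type*} [CommRing S] [IsDomain S] (R : Subring S)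
    (m : Ideal R) (hm : m.IsMaximal)
    (n : Ideal S) [hnp : n.IsPrime] (hn : n.IsMaximal)
    (hcon : n.comap R.subtype = m)
    (hloc : locSet ((algebraMap S (FractionRing S)).comp R.subtype) m
      = locSet (algebraMap S (FractionRing S)) n) :
    ∀ p : Ideal R, p.IsPrime → p ≤ m →
      (Ideal.map ((algebraMap S (Localization.AtPrime n)).comp R.subtype) p).IsPrime ∧
      Ideal.comap ((algebraMap S (Localization.AtPrime n)).comp R.subtype)
          (Ideal.map ((algebraMap S (Localization.AtPrime n)).comp R.subtype) p)
        = p :=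
  stmt_14_general R m hm n (hnp := hnp) hcon hloc
end

section
/- Let R ⊆ S be integral domains, 𝔫 ∈ Max S with R_{𝔫∩R} = S_𝔫, and let 𝔭 be a prime of R contained in 𝔪 = 𝔫 ∩ R, with chain 𝔭₀ ⊊ ⋯ ⊊ 𝔭_d = 𝔭 of primes of R. Then setting 𝔮ᵢ = 𝔭ᵢS_𝔫 ∩ S, the 𝔮ᵢ form a strictly increasing chain of prime ideals of S with 𝔮ᵢ ∩ R = 𝔭ᵢ for all i. -/
namespace IsLocalization.AtPrime

variable {A T : Type*} [CommRing A] [CommRing T] [Algebra A T] (P : Ideal A) [P.IsPrime]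
  [IsLocalization.AtPrime T P] {p : Ideal A}

theorem isPrime_map_of_le (hp : p.IsPrime) (hpP : p ≤ P) : (p.map (algebraMap A T)).IsPrime :=
  isPrime_of_isPrime_disjoint P.primeCompl T p hp (disjoint_compl_left.mono_right hpP)

theorem comap_map_of_le (hp : p.IsPrime) (hpP : p ≤ P) :
    (p.map (algebraMap A T)).comap (algebraMap A T) = p :=
  under_map_of_isPrime_disjoint P.primeCompl T hp (disjoint_compl_left.mono_right hpP)

end IsLocalization.AtPrime

section LocalizationOfSubring

variable {S : Type*} [CommRing S] [IsDomain S] (R : Subring S) (n : Ideal S)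

theorem exists_mul_eq_mul_of_locSet_subset
    (hloc : locSet (algebraMap S (FractionRing S)) n
      ⊆ locSet ((algebraMap S (FractionRing S)).comp R.subtype) (n.comap R.subtype))
    {s t : S} (ht : t ∉ n) : ∃ a b : R, (b : S) ∉ n ∧ s * b = a * t := by
  set g := algebraMap S (FractionRing S)
  have hgt : g t ≠ 0 :=
    (map_ne_zero_iff g (IsFractionRing.injective S _)).mpr (by rintro rfl; exact ht n.zero_mem)
  obtain ⟨a, b, hb, hab : g s / g t * g b = g a⟩ := hloc ⟨s, t, ht, div_mul_cancel₀ _ hgt⟩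
  refine ⟨a, b, hb, IsFractionRing.injective S (FractionRing S) (?_ : g _ = g _)⟩
  rw [map_mul, map_mul, ← hab, div_mul_eq_mul_div, div_mul_cancel₀ _ hgt]

theorem isLocalization_atPrime_comap_of_locSet_subset [n.IsPrime]
    (hloc : locSet (algebraMap S (FractionRing S)) n
      ⊆ locSet ((algebraMap S (FractionRing S)).comp R.subtype) (n.comap R.subtype)) :
    IsLocalization.AtPrime (Localization.AtPrime n) (n.comap R.subtype) where
  map_units b := IsLocalization.map_units (Localization.AtPrime n) (⟨b.1, b.2⟩ : n.primeCompl)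
  surj z := by
    obtain ⟨⟨s, t⟩, hst⟩ := IsLocalization.surj n.primeCompl z
    obtain ⟨a, b, hb, hsb⟩ := exists_mul_eq_mul_of_locSet_subset R n hloc (s := s) t.2
    refine ⟨⟨a, ⟨b, hb⟩⟩, (IsLocalization.map_units (Localization.AtPrime n) t).mul_right_cancel ?_⟩
    show z * _ * _ = _ * _
    rw [mul_right_comm, hst]
    show algebraMap S _ s * algebraMap S _ b = algebraMap S _ a * algebraMap S _ t
    rw [← map_mul, ← map_mul, hsb]
  exists_of_eq h := ⟨1, congrArg _ <| Subtype.ext <|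
    IsLocalization.injective (Localization.AtPrime n) n.primeCompl_le_nonZeroDivisors h⟩

end LocalizationOfSubring

theorem stmt_15_general {S : Type*} [CommRing S] [IsDomain S] (R : Subring S)
    (n : Ideal S) [hnp : n.IsPrime]
    (hloc : locSet ((algebraMap S (FractionRing S)).comp R.subtype) (n.comap R.subtype)
      = locSet (algebraMap S (FractionRing S)) n)
    (d : ℕ) (p : Fin (d + 1) → Ideal R)
    (hchain : StrictMono p) (hprime : ∀ i, (p i).IsPrime)
    (htop : p (Fin.last d) ≤ n.comap R.subtype)
    (q : Fin (d + 1) → Ideal S)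
    (hq : q = fun i => Ideal.comap (algebraMap S (Localization.AtPrime n))
      (Ideal.map ((algebraMap S (Localization.AtPrime n)).comp R.subtype) (p i))) :
    StrictMono q ∧ (∀ i, (q i).IsPrime) ∧ ∀ i, (q i).comap R.subtype = p i := by
  have := isLocalization_atPrime_comap_of_locSet_subset R n hloc.ge
  have hle (i : Fin (d + 1)) : p i ≤ n.comap R.subtype :=
    (hchain.monotone (Fin.le_last i)).trans htop
  have hcontract (i : Fin (d + 1)) : (q i).comap R.subtype = p i := by
    rw [hq, Ideal.comap_comap]
    exact IsLocalization.AtPrime.comap_map_of_le _ (hprime i) (hle i)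
  refine ⟨Monotone.strictMono_of_injective ?_ ?_, fun i => ?_, hcontract⟩
  · exact hq ▸ fun i j hij => Ideal.comap_mono (Ideal.map_mono (hchain.monotone hij))
  · exact Function.Injective.of_comp (f := Ideal.comap R.subtype)
      ((funext hcontract : Ideal.comap R.subtype ∘ q = p) ▸ hchain.injective)
  · exact hq ▸ Ideal.comap_isPrime _ _ (H := IsLocalization.AtPrime.isPrime_map_of_le
      (T := Localization.AtPrime n) _ (hprime i) (hle i))

/-- Let `R ⊆ S` be integral domains, `𝔫 ∈ Max S` with `R_{𝔫 ∩ R} = S_𝔫`, and let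
`𝔭₀ ⊊ ⋯ ⊊ 𝔭_d` be a chain of primes of `R` with `𝔭_d ⊆ 𝔪 = 𝔫 ∩ R`.  Setting
`𝔮ᵢ = 𝔭ᵢS_𝔫 ∩ S`, the `𝔮ᵢ` form a strictly increasing chain of primes of `S` with
`𝔮ᵢ ∩ R = 𝔭ᵢ` for all `i`. -/
theorem stmt_15 {S : Type*} [CommRing S] [IsDomain S] (R : Subring S)
    (n : Ideal S) [hnp : n.IsPrime] (hn : n.IsMaximal)
    (hloc : locSet ((algebraMap S (FractionRing S)).comp R.subtype) (n.comap R.subtype)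
      = locSet (algebraMap S (FractionRing S)) n)
    (d : ℕ) (p : Fin (d + 1) → Ideal R)
    (hchain : StrictMono p) (hprime : ∀ i, (p i).IsPrime)
    (htop : p (Fin.last d) ≤ n.comap R.subtype)
    (q : Fin (d + 1) → Ideal S)
    (hq : q = fun i => Ideal.comap (algebraMap S (Localization.AtPrime n))
      (Ideal.map ((algebraMap S (Localization.AtPrime n)).comp R.subtype) (p i))) :
    StrictMono q ∧ (∀ i, (q i).IsPrime) ∧ ∀ i, (q i).comap R.subtype = p i :=
  stmt_15_general R n (hnp := hnp) hloc d p hchain hprime htop q hq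
end

section
/- Let A = kQ/I be the quiver algebra with Q having two vertices 1, 2, arrows a: 1 → 2, b: 2 → 1, a loop y at vertex 1, and I = ⟨yba − bay⟩. Then the center of A is isomorphic to k + (x)k[x,y] where x = ba, i.e., the center is the nonnoetherian ring k[x, xy, xy², …]. -/
open MvPolynomial

/-- The defining relations of the quiver algebra `A = kQ/⟨yba - bay⟩`, where `Q` has two
vertices `1, 2` (idempotents `e₁ = ι 0`, `e₂ = ι 1`), arrows `a : 1 → 2` (`ι 2`),
`b : 2 → 1` (`ι 3`), and a loop `y` at vertex `1` (`ι 4`). -/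
inductive QuiverRel (k : Type*) [Field k] :
    FreeAlgebra k (Fin 5) → FreeAlgebra k (Fin 5) → Prop
  | unit : QuiverRel k (FreeAlgebra.ι k 0 + FreeAlgebra.ι k 1) 1
  | idem₁ : QuiverRel k (FreeAlgebra.ι k 0 * FreeAlgebra.ι k 0) (FreeAlgebra.ι k 0)
  | idem₂ : QuiverRel k (FreeAlgebra.ι k 1 * FreeAlgebra.ι k 1) (FreeAlgebra.ι k 1)
  | orth₁₂ : QuiverRel k (FreeAlgebra.ι k 0 * FreeAlgebra.ι k 1) 0
  | orth₂₁ : QuiverRel k (FreeAlgebra.ι k 1 * FreeAlgebra.ι k 0) 0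
  | aTail : QuiverRel k (FreeAlgebra.ι k 2 * FreeAlgebra.ι k 0) (FreeAlgebra.ι k 2)
  | aHead : QuiverRel k (FreeAlgebra.ι k 1 * FreeAlgebra.ι k 2) (FreeAlgebra.ι k 2)
  | bTail : QuiverRel k (FreeAlgebra.ι k 3 * FreeAlgebra.ι k 1) (FreeAlgebra.ι k 3)
  | bHead : QuiverRel k (FreeAlgebra.ι k 0 * FreeAlgebra.ι k 3) (FreeAlgebra.ι k 3)
  | yTail : QuiverRel k (FreeAlgebra.ι k 4 * FreeAlgebra.ι k 0) (FreeAlgebra.ι k 4)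
  | yHead : QuiverRel k (FreeAlgebra.ι k 0 * FreeAlgebra.ι k 4) (FreeAlgebra.ι k 4)
  | potential : QuiverRel k
      (FreeAlgebra.ι k 4 * FreeAlgebra.ι k 3 * FreeAlgebra.ι k 2)
      (FreeAlgebra.ι k 3 * FreeAlgebra.ι k 2 * FreeAlgebra.ι k 4)

/-!
Let `x = ba`. The assignment `e₁ ↦ E₁₁`, `e₂ ↦ E₂₂`, `a ↦ E₂₁`, `b ↦ X₀ E₁₂`, `y ↦ X₁ E₁₁`
respects the relations and gives `toMatrix : A → M₂(k[X₀, X₁])`. Left multiplication by the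
generators shows that every element of `A` is
`c e₂ + e₁ p(x, y) + a q(x, y) + r(x, y) b + a s(x, y) b`, whose image is
`[[p, r X₀], [q, c + s X₀]]`; hence `toMatrix` is injective. A central element commutes with `e₂`
and `a`, so its image is a scalar matrix `f • 1` with `f = c + s X₀`, which lies in
`k + X₀ k[X₀, X₁] = k[X₀, X₀X₁, X₀X₁², …]`. Conversely `X₀X₁ⁿ • 1` is the image of
`x yⁿ + a yⁿ b`, which is therefore central.
-/

theorem Matrix.eq_scalar_of_commute_fin_two {R : Type*} [Semiring R]
    {M : Matrix (Fin 2) (Fin 2) R} (h₂₂ : Commute !![0, 0; 0, 1] M)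
    (h₂₁ : Commute !![0, 0; 1, 0] M) : M = Matrix.scalar (Fin 2) (M 1 1) := by
  have h₂₂ := congrFun₂ h₂₂.eq
  have h₂₁ := congrFun₂ h₂₁.eq
  simp [Matrix.mul_apply, Fin.sum_univ_two, Fin.forall_fin_two] at h₂₂ h₂₁
  obtain ⟨-, h₁₀⟩ := h₂₂
  obtain ⟨-, h₀₀, h₀₁⟩ := h₂₁
  ext i j
  fin_cases i <;> fin_cases j <;> simp [h₀₀, h₀₁, h₁₀]

theorem MvPolynomial.X_zero_mul_mem_adjoin {R : Type*} [CommSemiring R]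
    (q : MvPolynomial (Fin 2) R) :
    X 0 * q ∈ Algebra.adjoin R {p : MvPolynomial (Fin 2) R | ∃ n : ℕ, p = X 0 * X 1 ^ n} := by
  suffices h : ∀ m, X 0 * X 1 ^ m * q ∈ Algebra.adjoin R {p | ∃ n : ℕ, p = X 0 * X 1 ^ n} by
    simpa using h 0
  induction q using MvPolynomial.induction_on with
  | C c =>
    intro m
    rw [mul_comm]
    exact mul_mem (Subalgebra.algebraMap_mem _ c) (Algebra.subset_adjoin ⟨m, rfl⟩)
  | add p q hp hq => exact fun m => by rw [mul_add]; exact add_mem (hp m) (hq m)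
  | mul_X p i hp =>
    intro m
    obtain rfl | rfl := Fin.exists_fin_two.mp ⟨i, rfl⟩
    · rw [← mul_assoc]
      exact mul_mem (hp m) (Algebra.subset_adjoin ⟨0, by simp⟩)
    · rw [show X 0 * X 1 ^ m * (p * X 1) = X 0 * X 1 ^ (m + 1) * p by ring]
      exact hp (m + 1)

noncomputable section

namespace QuiverCenter

open scoped IsMulCommutative

variable {k : Type*} [Field k]

variable (k) in
abbrev A := RingQuot (QuiverRel k)

variable (k) in
def mk : FreeAlgebra k (Fin 5) →ₐ[k] A k := RingQuot.mkAlgHom k (QuiverRel k)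

def e₁ : A k := mk k (FreeAlgebra.ι k 0)
def e₂ : A k := mk k (FreeAlgebra.ι k 1)
def a : A k := mk k (FreeAlgebra.ι k 2)
def b : A k := mk k (FreeAlgebra.ι k 3)
def y : A k := mk k (FreeAlgebra.ι k 4)

theorem mk_eq_of_rel {s t : FreeAlgebra k (Fin 5)} (h : QuiverRel k s t) : mk k s = mk k t :=
  RingQuot.mkAlgHom_rel k h

theorem e₁_add_e₂ : (e₁ + e₂ : A k) = 1 := by
  simpa only [e₁, e₂, map_add, map_one] using mk_eq_of_rel (k := k) .unit
theorem e₁_mul_e₁ : (e₁ * e₁ : A k) = e₁ := by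
  simpa only [e₁, map_mul] using mk_eq_of_rel (k := k) .idem₁
theorem e₂_mul_e₂ : (e₂ * e₂ : A k) = e₂ := by
  simpa only [e₂, map_mul] using mk_eq_of_rel (k := k) .idem₂
theorem e₁_mul_e₂ : (e₁ * e₂ : A k) = 0 := by
  simpa only [e₁, e₂, map_mul, map_zero] using mk_eq_of_rel (k := k) .orth₁₂
theorem e₂_mul_e₁ : (e₂ * e₁ : A k) = 0 := by
  simpa only [e₁, e₂, map_mul, map_zero] using mk_eq_of_rel (k := k) .orth₂₁
theorem a_mul_e₁ : (a * e₁ : A k) = a := by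
  simpa only [a, e₁, map_mul] using mk_eq_of_rel (k := k) .aTail
theorem e₂_mul_a : (e₂ * a : A k) = a := by
  simpa only [a, e₂, map_mul] using mk_eq_of_rel (k := k) .aHead
theorem b_mul_e₂ : (b * e₂ : A k) = b := by
  simpa only [b, e₂, map_mul] using mk_eq_of_rel (k := k) .bTail
theorem e₁_mul_b : (e₁ * b : A k) = b := by
  simpa only [b, e₁, map_mul] using mk_eq_of_rel (k := k) .bHead
theorem y_mul_e₁ : (y * e₁ : A k) = y := by
  simpa only [y, e₁, map_mul] using mk_eq_of_rel (k := k) .yTail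
theorem e₁_mul_y : (e₁ * y : A k) = y := by
  simpa only [y, e₁, map_mul] using mk_eq_of_rel (k := k) .yHead
theorem y_mul_b_mul_a : (y * (b * a) : A k) = b * a * y := by
  simpa only [y, a, b, map_mul, mul_assoc] using mk_eq_of_rel (k := k) .potential

theorem e₁_mul_a : (e₁ * a : A k) = 0 := by
  rw [← e₂_mul_a, ← mul_assoc, e₁_mul_e₂, zero_mul]
theorem a_mul_e₂ : (a * e₂ : A k) = 0 := by
  rw [← a_mul_e₁, mul_assoc, e₁_mul_e₂, mul_zero]
theorem b_mul_e₁ : (b * e₁ : A k) = 0 := by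
  rw [← b_mul_e₂, mul_assoc, e₂_mul_e₁, mul_zero]
theorem y_mul_e₂ : (y * e₂ : A k) = 0 := by
  rw [← y_mul_e₁, mul_assoc, e₁_mul_e₂, mul_zero]
theorem a_mul_a : (a * a : A k) = 0 := by
  nth_rw 2 [← e₂_mul_a]
  rw [← mul_assoc, a_mul_e₂, zero_mul]
theorem y_mul_a : (y * a : A k) = 0 := by
  rw [← e₂_mul_a, ← mul_assoc, y_mul_e₂, zero_mul]

variable (k) in
abbrev P := MvPolynomial (Fin 2) k

instance : IsMulCommutative (Algebra.adjoin k {b * a, y} : Subalgebra k (A k)) :=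
  Algebra.isMulCommutative_adjoin k <| by
    rintro _ (rfl | rfl) _ (rfl | rfl)
    exacts [rfl, (y_mul_b_mul_a).symm, y_mul_b_mul_a, rfl]

def ofPoly : P k →ₐ[k] A k :=
  (Algebra.adjoin k {b * a, y}).val.comp
    (aeval ![⟨b * a, Algebra.subset_adjoin (by simp)⟩, ⟨y, Algebra.subset_adjoin (by simp)⟩])

theorem ofPoly_X_zero : ofPoly (X 0 : P k) = b * a := by simp [ofPoly]
theorem ofPoly_X_one : ofPoly (X 1 : P k) = y := by simp [ofPoly]

theorem ofPoly_mem_adjoin (p : P k) : ofPoly p ∈ Algebra.adjoin k {b * a, y} :=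
  Subtype.prop _

theorem commute_e₁_ofPoly (p : P k) : Commute e₁ (ofPoly p) := by
  refine Algebra.commute_of_mem_adjoin_of_forall_mem_commute (ofPoly_mem_adjoin p) ?_
  rintro _ (rfl | rfl)
  · rw [Commute, SemiconjBy, ← mul_assoc, e₁_mul_b, mul_assoc, a_mul_e₁]
  · rw [Commute, SemiconjBy, e₁_mul_y, y_mul_e₁]

theorem ofPoly_C_mul (c : k) (w : A k) : ofPoly (C c) * w = c • w := by
  rw [← algebraMap_eq, AlgHom.commutes, Algebra.smul_def]

theorem e₁_mul_ofPoly_mul_b (r : P k) : e₁ * ofPoly r * b = ofPoly r * b := by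
  rw [(commute_e₁_ofPoly r).eq, mul_assoc, e₁_mul_b]

theorem e₂_mul_ofPoly_mul_b (r : P k) : e₂ * ofPoly r * b = 0 := by
  rw [mul_assoc, ← e₁_mul_ofPoly_mul_b, ← mul_assoc, ← mul_assoc, e₂_mul_e₁, zero_mul, zero_mul]

theorem b_mul_ofPoly_mul_b (r : P k) : b * ofPoly r * b = 0 := by
  rw [mul_assoc, ← e₁_mul_ofPoly_mul_b, ← mul_assoc, ← mul_assoc, b_mul_e₁, zero_mul, zero_mul]

theorem b_mul_a_mul_ofPoly (q : P k) : b * a * ofPoly q = e₁ * ofPoly (X 0 * q) := by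
  rw [map_mul, ofPoly_X_zero, ← mul_assoc, ← mul_assoc, e₁_mul_b]

theorem y_mul_ofPoly (p : P k) : y * ofPoly p = e₁ * ofPoly (X 1 * p) := by
  rw [map_mul, ofPoly_X_one, ← mul_assoc, e₁_mul_y]

def normalForm (c : k) (p q r s : P k) : A k :=
  c • e₂ + e₁ * ofPoly p + a * ofPoly q + ofPoly r * b + a * ofPoly s * b

theorem normalForm_add (c c' : k) (p q r s p' q' r' s' : P k) :
    normalForm c p q r s + normalForm c' p' q' r' s' =
      normalForm (c + c') (p + p') (q + q') (r + r') (s + s') := by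
  simp only [normalForm, map_add, add_smul, mul_add, add_mul]
  abel

theorem smul_normalForm (t c : k) (p q r s : P k) :
    t • normalForm c p q r s = normalForm (t * c) (t • p) (t • q) (t • r) (t • s) := by
  simp only [normalForm, map_smul, smul_add, mul_smul, mul_smul_comm, smul_mul_assoc]

theorem e₁_mul_normalForm (c : k) (p q r s : P k) :
    e₁ * normalForm c p q r s = normalForm 0 p 0 r 0 := by
  simp only [normalForm, mul_add, mul_smul_comm, ← mul_assoc, e₁_mul_e₂, e₁_mul_e₁, e₁_mul_a,
    e₁_mul_ofPoly_mul_b, map_zero, mul_zero, zero_mul, smul_zero, zero_smul, add_zero, zero_add]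

theorem e₂_mul_normalForm (c : k) (p q r s : P k) :
    e₂ * normalForm c p q r s = normalForm c 0 q 0 s := by
  simp only [normalForm, mul_add, mul_smul_comm, ← mul_assoc, e₂_mul_e₂, e₂_mul_e₁, e₂_mul_a,
    e₂_mul_ofPoly_mul_b, map_zero, mul_zero, zero_mul, add_zero]

theorem a_mul_normalForm (c : k) (p q r s : P k) :
    a * normalForm c p q r s = normalForm 0 0 p 0 r := by
  simp only [normalForm, mul_add, mul_smul_comm, ← mul_assoc, a_mul_e₂, a_mul_e₁, a_mul_a,
    map_zero, mul_zero, zero_mul, smul_zero, zero_smul, add_zero, zero_add]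

theorem b_mul_normalForm (c : k) (p q r s : P k) :
    b * normalForm c p q r s = normalForm 0 (X 0 * q) 0 (C c + X 0 * s) 0 := by
  simp only [normalForm, mul_add, mul_smul_comm, ← mul_assoc, b_mul_e₂, b_mul_e₁,
    b_mul_a_mul_ofPoly, b_mul_ofPoly_mul_b, e₁_mul_ofPoly_mul_b, map_add, add_mul, ofPoly_C_mul,
    map_zero, mul_zero, zero_mul, zero_smul, add_zero, zero_add]
  abel

theorem y_mul_normalForm (c : k) (p q r s : P k) :
    y * normalForm c p q r s = normalForm 0 (X 1 * p) 0 (X 1 * r) 0 := by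
  simp only [normalForm, mul_add, mul_smul_comm, ← mul_assoc, y_mul_e₂, y_mul_e₁, y_mul_a,
    y_mul_ofPoly, e₁_mul_ofPoly_mul_b, map_zero, mul_zero, zero_mul, smul_zero, zero_smul, add_zero,
    zero_add]

variable (k) in
def normalForms : Submodule k (A k) where
  carrier := {z | ∃ c p q r s, z = normalForm c p q r s}
  add_mem' := by
    rintro _ _ ⟨c, p, q, r, s, rfl⟩ ⟨c', p', q', r', s', rfl⟩
    exact ⟨_, _, _, _, _, normalForm_add ..⟩
  zero_mem' := ⟨0, 0, 0, 0, 0, by simp [normalForm]⟩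
  smul_mem' := by
    rintro t _ ⟨c, p, q, r, s, rfl⟩
    exact ⟨_, _, _, _, _, smul_normalForm ..⟩

theorem mem_normalForms (z : A k) : z ∈ normalForms k := by
  suffices h : ∀ w ∈ normalForms k, z * w ∈ normalForms k by
    simpa using h 1 ⟨1, 1, 0, 0, 0, by simpa [normalForm, add_comm] using e₁_add_e₂.symm⟩
  obtain ⟨t, rfl⟩ := RingQuot.mkAlgHom_surjective k (QuiverRel k) z
  induction t using FreeAlgebra.induction with
  | grade0 c =>
    intro w hw
    rw [AlgHom.commutes, ← Algebra.smul_def]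
    exact Submodule.smul_mem _ c hw
  | grade1 i =>
    rintro _ ⟨c, p, q, r, s, rfl⟩
    fin_cases i
    exacts [⟨_, _, _, _, _, e₁_mul_normalForm ..⟩, ⟨_, _, _, _, _, e₂_mul_normalForm ..⟩,
      ⟨_, _, _, _, _, a_mul_normalForm ..⟩, ⟨_, _, _, _, _, b_mul_normalForm ..⟩,
      ⟨_, _, _, _, _, y_mul_normalForm ..⟩]
  | mul t₁ t₂ h₁ h₂ =>
    intro w hw
    rw [map_mul, mul_assoc]
    exact h₁ _ (h₂ w hw)
  | add t₁ t₂ h₁ h₂ =>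
    intro w hw
    rw [map_add, add_mul]
    exact add_mem (h₁ w hw) (h₂ w hw)

def generatorMatrix : Fin 5 → Matrix (Fin 2) (Fin 2) (P k) :=
  ![!![1, 0; 0, 0], !![0, 0; 0, 1], !![0, 0; 1, 0], !![0, X 0; 0, 0], !![X 1, 0; 0, 0]]

def toMatrix : A k →ₐ[k] Matrix (Fin 2) (Fin 2) (P k) :=
  RingQuot.liftAlgHom k ⟨FreeAlgebra.lift k generatorMatrix, fun _ _ h => by
    induction h <;>
      simp [generatorMatrix, Matrix.one_fin_two, ← Matrix.ext_iff, funext_iff, Fin.forall_fin_two,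
        mul_comm]⟩

theorem toMatrix_mk_ι (i : Fin 5) : toMatrix (mk k (FreeAlgebra.ι k i)) = generatorMatrix i := by
  rw [toMatrix, mk, RingQuot.liftAlgHom_mkAlgHom_apply, FreeAlgebra.lift_ι_apply]

theorem toMatrix_e₁ : toMatrix (e₁ : A k) = !![1, 0; 0, 0] := toMatrix_mk_ι 0
theorem toMatrix_e₂ : toMatrix (e₂ : A k) = !![0, 0; 0, 1] := toMatrix_mk_ι 1
theorem toMatrix_a : toMatrix (a : A k) = !![0, 0; 1, 0] := toMatrix_mk_ι 2
theorem toMatrix_b : toMatrix (b : A k) = !![0, X 0; 0, 0] := toMatrix_mk_ι 3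
theorem toMatrix_y : toMatrix (y : A k) = !![X 1, 0; 0, 0] := toMatrix_mk_ι 4

theorem toMatrix_e₁_mul_ofPoly (p : P k) : toMatrix (e₁ * ofPoly p) = !![p, 0; 0, 0] := by
  induction p using MvPolynomial.induction_on with
  | C c =>
    rw [← algebraMap_eq, AlgHom.commutes, ← Algebra.commutes, ← Algebra.smul_def, map_smul,
      toMatrix_e₁]
    simp [Matrix.smul_of, ← C_eq_smul_one]
  | add p q hp hq => rw [map_add, mul_add, map_add, hp, hq]; simp
  | mul_X p i hp =>
    obtain rfl | rfl := Fin.exists_fin_two.mp ⟨i, rfl⟩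
    · rw [map_mul ofPoly, ← mul_assoc, map_mul toMatrix, hp, ofPoly_X_zero, map_mul, toMatrix_b,
        toMatrix_a]
      simp [funext_iff, Fin.forall_fin_two]
    · rw [map_mul ofPoly, ← mul_assoc, map_mul toMatrix, hp, ofPoly_X_one, toMatrix_y]
      simp [funext_iff, Fin.forall_fin_two]

theorem toMatrix_normalForm (c : k) (p q r s : P k) :
    toMatrix (normalForm c p q r s) = !![p, r * X 0; q, C c + s * X 0] := by
  have hq : a * ofPoly q = a * (e₁ * ofPoly q) := by rw [← mul_assoc, a_mul_e₁]
  have hs : a * ofPoly s * b = a * (e₁ * ofPoly s) * b := by rw [← mul_assoc (a : A k), a_mul_e₁]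
  rw [normalForm, hq, hs, ← e₁_mul_ofPoly_mul_b]
  simp [toMatrix_e₁_mul_ofPoly, toMatrix_e₂, toMatrix_a, toMatrix_b, Matrix.smul_of,
    ← C_eq_smul_one]

theorem toMatrix_injective : Function.Injective (toMatrix : A k → _) := by
  intro z w h
  obtain ⟨c, p, q, r, s, rfl⟩ := mem_normalForms z
  obtain ⟨c', p', q', r', s', rfl⟩ := mem_normalForms w
  simp [toMatrix_normalForm] at h
  obtain ⟨⟨rfl, rfl⟩, rfl, hcs⟩ := h
  obtain rfl : c = c' := by simpa using congrArg constantCoeff hcs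
  obtain rfl := mul_right_cancel₀ (X_ne_zero 0) (add_left_cancel hcs)
  rfl

theorem toMatrix_eq_scalar_of_mem_center {z : A k} (hz : z ∈ Subalgebra.center k (A k)) :
    toMatrix z = Matrix.scalar (Fin 2) (toMatrix z 1 1) := by
  refine Matrix.eq_scalar_of_commute_fin_two ?_ ?_
  · rw [← toMatrix_e₂]
    exact Commute.map (Subalgebra.mem_center_iff.mp hz e₂) toMatrix
  · rw [← toMatrix_a]
    exact Commute.map (Subalgebra.mem_center_iff.mp hz a) toMatrix

theorem mem_center_of_toMatrix_eq_scalar {z : A k} {f : P k}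
    (h : toMatrix z = Matrix.scalar (Fin 2) f) : z ∈ Subalgebra.center k (A k) := by
  refine Subalgebra.mem_center_iff.mpr fun w => toMatrix_injective ?_
  rw [map_mul, map_mul, h]
  exact (Matrix.scalar_commute f (fun _ => Commute.all _ _) _).symm

variable (k) in
/-- On the center, `toMatrix` takes scalar values; this reads off the scalar. -/
def centerToPoly : Subalgebra.center k (A k) →ₐ[k] P k :=
  AlgHom.ofLinearMap
    ((Matrix.entryLinearMap k (P k) 1 1).comp
      (toMatrix.toLinearMap.comp (Subalgebra.center k (A k)).val.toLinearMap))
    (by simp)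
    (fun z w => by
      simp only [LinearMap.comp_apply, AlgHom.toLinearMap_apply, Subalgebra.coe_val,
        map_mul, Matrix.entryLinearMap_apply]
      rw [toMatrix_eq_scalar_of_mem_center z.2, toMatrix_eq_scalar_of_mem_center w.2]
      simp)

theorem centerToPoly_apply (z : Subalgebra.center k (A k)) :
    centerToPoly k z = toMatrix (z : A k) 1 1 :=
  rfl

theorem centerToPoly_injective : Function.Injective (centerToPoly k) := by
  intro z w h
  rw [centerToPoly_apply, centerToPoly_apply] at h
  apply Subtype.ext
  apply toMatrix_injective
  rw [toMatrix_eq_scalar_of_mem_center z.2, toMatrix_eq_scalar_of_mem_center w.2, h]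

theorem range_centerToPoly :
    (centerToPoly k).range = Algebra.adjoin k {p : P k | ∃ n : ℕ, p = X 0 * X 1 ^ n} := by
  apply le_antisymm
  · rintro _ ⟨z, rfl⟩
    change centerToPoly k z ∈ _
    obtain ⟨c, p, q, r, s, hz⟩ := mem_normalForms (z : A k)
    rw [centerToPoly_apply, hz, toMatrix_normalForm]
    simpa [mul_comm s] using
      add_mem (Subalgebra.algebraMap_mem _ c) (MvPolynomial.X_zero_mul_mem_adjoin s)
  · refine Algebra.adjoin_le ?_
    rintro _ ⟨n, rfl⟩
    -- the central element `x yⁿ + a yⁿ b`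
    have h : toMatrix (normalForm 0 (X 0 * X 1 ^ n) 0 0 (X 1 ^ n)) =
        Matrix.scalar (Fin 2) (X 0 * X 1 ^ n : P k) := by
      rw [toMatrix_normalForm]
      ext i j
      fin_cases i <;> fin_cases j <;> simp [mul_comm]
    exact ⟨⟨_, mem_center_of_toMatrix_eq_scalar h⟩, by simp [centerToPoly_apply, h]⟩

end QuiverCenter

end

/-- The center of the quiver algebra `A = kQ/⟨yba - bay⟩` is isomorphic to the
nonnoetherian ring `k + x·k[x,y] = k[x, xy, xy², …]` (with `x = ba`). -/
theorem stmt_19 (k : Type*) [Field k] :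
    Nonempty
      ((Subalgebra.center k (RingQuot (QuiverRel k))) ≃ₐ[k]
        (Algebra.adjoin k
          {p : MvPolynomial (Fin 2) k | ∃ n : ℕ, p = X 0 * X 1 ^ n})) :=
  ⟨(AlgEquiv.ofInjective _ QuiverCenter.centerToPoly_injective).trans
    (Subalgebra.equivOfEq _ _ QuiverCenter.range_centerToPoly)⟩
end
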